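/- (Corollary 2, off-diagonal.) Assume Σ_{s=1}^D p_{is}·p_{js} ≍ D and K_ij ≠ 0. Then the uncorrected estimator G_ij^{(D)}/D = (1/D)·Σ_{s=1}^D Y_{is}·Y_{js} converges in probability to K_ij as D → ∞ if and only if lim_{D→∞} ( Σ_{s=1}^D p_{is}·p_{js} ) / D = 1. -/

import Mathlib

open MeasureTheory ProbabilityTheory Filter Finset Topology BoundedContinuousFunction

/-- The centered bivariate Gaussian law with covariance matrix `[[a, c], [c, b]]`,
characterized through the Cramér–Wold device. -/
def IsCenteredGaussianPair (ν : Measure (ℝ × ℝ)) (a b c : ℝ) : Prop :=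
  IsProbabilityMeasure ν ∧
    ∀ t u : ℝ, ν.map (fun p => t * p.1 + u * p.2) =
      gaussianReal 0 (Real.toNNReal (t ^ 2 * a + 2 * t * u * c + u ^ 2 * b))

/-- Codomain family for the joint family of the two indicator families (real-valued)
and the family of Gaussian pairs. -/
abbrev mixedCod (α β γ : Type*) : α ⊕ β ⊕ γ → Type _ :=
  Sum.elim (fun _ => ℝ) (Sum.elim (fun _ => ℝ) fun _ => ℝ × ℝ)

/-- The measurable-space structures on the codomains. -/
def mixedMS {α β γ : Type*} : ∀ x : α ⊕ β ⊕ γ, MeasurableSpace (mixedCod α β γ x)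
  | Sum.inl _ => (inferInstance : MeasurableSpace ℝ)
  | Sum.inr (Sum.inl _) => (inferInstance : MeasurableSpace ℝ)
  | Sum.inr (Sum.inr _) => (inferInstance : MeasurableSpace (ℝ × ℝ))

/-- The joint family made of the two indicator families and the Gaussian-pair family. -/
def mixedFam {Ω : Type*} {α β γ : Type*} (f : α → Ω → ℝ) (g : β → Ω → ℝ)
    (h : γ → Ω → ℝ × ℝ) : ∀ x : α ⊕ β ⊕ γ, Ω → mixedCod α β γ x
  | Sum.inl s => f s
  | Sum.inr (Sum.inl s) => g s
  | Sum.inr (Sum.inr s) => h s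

section AuxLemmas

set_option linter.unusedSectionVars false

open Real Set
open scoped NNReal ENNReal



lemma myInt_pow_exp {b : ℝ} (hb : 0 < b) (n : ℕ) :
    Integrable (fun x : ℝ => x ^ n * Real.exp (-b * x ^ 2)) := by
  have h := integrable_rpow_mul_exp_neg_mul_sq hb (s := (n : ℝ)) (lt_of_lt_of_le (by norm_num) (Nat.cast_nonneg n))
  simpa [Real.rpow_natCast] using h

lemma myTendsto_mul_exp {b : ℝ} (hb : 0 < b) :
    Tendsto (fun x : ℝ => x * Real.exp (-b * x ^ 2)) atTop (𝓝 0) := by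
  have h := rpow_mul_exp_neg_mul_sq_isLittleO_exp_neg hb 1
  have h2 : Tendsto (fun x : ℝ => Real.exp (-(1/2) * x)) atTop (𝓝 0) := by
    apply Real.tendsto_exp_atBot.comp
    exact Tendsto.const_mul_atTop_of_neg (by norm_num) tendsto_id
  simpa [Real.rpow_one] using h.trans_tendsto h2

lemma myTendsto_mul_exp_bot {b : ℝ} (hb : 0 < b) :
    Tendsto (fun x : ℝ => x * Real.exp (-b * x ^ 2)) atBot (𝓝 0) := by
  have h := (myTendsto_mul_exp hb).comp tendsto_neg_atBot_atTop
  have : (fun x : ℝ => (-x) * Real.exp (-b * (-x) ^ 2)) = fun x : ℝ => -(x * Real.exp (-b * x ^ 2)) := by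
    funext x; ring_nf
  rw [Function.comp_def] at h
  simp only [this] at h
  simpa using h.neg

lemma myIntegral_sq_exp {b : ℝ} (hb : 0 < b) :
    ∫ x : ℝ, x ^ 2 * Real.exp (-b * x ^ 2) = Real.sqrt (π / b) / (2 * b) := by
  have hg : ∀ x : ℝ, HasDerivAt (fun y : ℝ => y * Real.exp (-b * y ^ 2))
      (Real.exp (-b * x ^ 2) - 2 * b * (x ^ 2 * Real.exp (-b * x ^ 2))) x := by
    intro x
    have h1 : HasDerivAt (fun y : ℝ => -b * y ^ 2) (-b * (2 * x)) x := by
      simpa using (hasDerivAt_pow 2 x).const_mul (-b)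
    have h2 := h1.exp
    have := (hasDerivAt_id x).fun_mul h2
    refine this.congr_deriv ?_
    simp [id]
    ring
  have hint1 : Integrable (fun x : ℝ => Real.exp (-b * x ^ 2)) := integrable_exp_neg_mul_sq hb
  have hint2 : Integrable (fun x : ℝ => x ^ 2 * Real.exp (-b * x ^ 2)) := myInt_pow_exp hb 2
  have hder : Integrable (fun x : ℝ =>
      Real.exp (-b * x ^ 2) - 2 * b * (x ^ 2 * Real.exp (-b * x ^ 2))) :=
    hint1.sub (hint2.const_mul (2*b))
  have htop := myTendsto_mul_exp hb
  have hbot := myTendsto_mul_exp_bot hb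
  have hIoi := integral_Ioi_of_hasDerivAt_of_tendsto (f := fun y : ℝ => y * Real.exp (-b * y ^ 2))
    (a := 0) (m := 0) ((continuous_id.mul ((Real.continuous_exp.comp (by continuity)))).continuousWithinAt) (fun x _ => hg x) hder.integrableOn htop
  have hIic := integral_Iic_of_hasDerivAt_of_tendsto (f := fun y : ℝ => y * Real.exp (-b * y ^ 2))
    (a := 0) (m := 0) ((continuous_id.mul ((Real.continuous_exp.comp (by continuity)))).continuousWithinAt) (fun x _ => hg x) hder.integrableOn hbot
  have hsplit := intervalIntegral.integral_Iic_add_Ioi (f := fun x : ℝ =>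
      Real.exp (-b * x ^ 2) - 2 * b * (x ^ 2 * Real.exp (-b * x ^ 2))) (b := (0:ℝ))
    hder.integrableOn hder.integrableOn
  rw [hIoi, hIic] at hsplit
  simp only [mul_zero, zero_mul, neg_zero, sub_zero, zero_sub, Real.exp_zero] at hsplit
  have h0 : ∫ x : ℝ, (Real.exp (-b * x ^ 2) - 2 * b * (x ^ 2 * Real.exp (-b * x ^ 2))) = 0 := by
    rw [← hsplit]; ring
  rw [integral_sub hint1 (hint2.const_mul (2*b)), integral_gaussian,
    integral_const_mul] at h0
  have h2b : (2:ℝ) * b ≠ 0 := by positivity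
  field_simp at h0 ⊢
  linarith
lemma gaussianReal_integral_eq (v : ℝ≥0) (hv : v ≠ 0) (g : ℝ → ℝ) :
    ∫ x, g x ∂(gaussianReal 0 v) = ∫ x, gaussianPDFReal 0 v x * g x := by
  rw [gaussianReal_of_var_ne_zero _ hv, gaussianPDF_def,
    show (fun x => ENNReal.ofReal (gaussianPDFReal 0 v x))
      = fun x => ((Real.toNNReal (gaussianPDFReal 0 v x) : ℝ≥0) : ℝ≥0∞) from rfl,
    integral_withDensity_eq_integral_smul
      ((measurable_gaussianPDFReal 0 v).real_toNNReal) g]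
  congr 1; funext x
  rw [NNReal.smul_def, smul_eq_mul, Real.coe_toNNReal _ (gaussianPDFReal_nonneg 0 v x)]

lemma gaussianReal_integrable_iff (v : ℝ≥0) (hv : v ≠ 0) (g : ℝ → ℝ) :
    Integrable g (gaussianReal 0 v) ↔
      Integrable (fun x => gaussianPDFReal 0 v x * g x) := by
  rw [gaussianReal_of_var_ne_zero _ hv, gaussianPDF_def,
    show (fun x => ENNReal.ofReal (gaussianPDFReal 0 v x))
      = fun x => ((Real.toNNReal (gaussianPDFReal 0 v x) : ℝ≥0) : ℝ≥0∞) from rfl,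
    integrable_withDensity_iff_integrable_smul
      ((measurable_gaussianPDFReal 0 v).real_toNNReal)]
  constructor <;> intro h <;> refine h.congr (Filter.Eventually.of_forall fun x => ?_) <;>
    simp only [NNReal.smul_def, smul_eq_mul,
      Real.coe_toNNReal _ (gaussianPDFReal_nonneg 0 v x)]

lemma pdf_mul_eq (v : ℝ≥0) (hv : v ≠ 0) (n : ℕ) :
    (fun x : ℝ => gaussianPDFReal 0 v x * x ^ n)
      = fun x => (Real.sqrt (2 * π * v))⁻¹ * (x ^ n * Real.exp (-(2 * (v:ℝ))⁻¹ * x ^ 2)) := by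
  funext x
  have hvpos : (0:ℝ) < (v:ℝ) := by positivity
  rw [gaussianPDFReal]
  have : -(x - 0) ^ 2 / (2 * (v:ℝ)) = -(2 * (v:ℝ))⁻¹ * x ^ 2 := by ring
  rw [this]; ring

lemma myGauss_integrable_pow (v : ℝ≥0) (n : ℕ) :
    Integrable (fun x : ℝ => x ^ n) (gaussianReal 0 v) := by
  by_cases hv : v = 0
  · rw [hv, gaussianReal_zero_var]
    refine ⟨(measurable_id'.pow_const n).aestronglyMeasurable, ?_⟩
    rw [HasFiniteIntegral, lintegral_dirac' _ (by measurability)]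
    exact ENNReal.coe_lt_top
  · have hvpos : (0:ℝ) < (v:ℝ) := by positivity
    rw [gaussianReal_integrable_iff v hv, pdf_mul_eq v hv]
    exact (myInt_pow_exp (by positivity) n).const_mul _

lemma myGauss_sq_moment (v : ℝ≥0) :
    ∫ x, x ^ 2 ∂(gaussianReal 0 v) = v := by
  by_cases hv : v = 0
  · rw [hv, gaussianReal_zero_var, integral_dirac]; simp
  · have hvpos : (0:ℝ) < (v:ℝ) := by positivity
    rw [gaussianReal_integral_eq v hv, pdf_mul_eq v hv, integral_const_mul,
      myIntegral_sq_exp (by positivity)]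
    have h1 : π / (2 * (v:ℝ))⁻¹ = 2 * π * v := by field_simp
    have h2 : (2 : ℝ) * (2 * (v:ℝ))⁻¹ = (v:ℝ)⁻¹ := by field_simp
    rw [h1, h2]
    have h3 : Real.sqrt (2 * π * v) ≠ 0 := by
      refine Real.sqrt_ne_zero'.mpr ?_; positivity
    field_simp

noncomputable def mu4 (v : ℝ≥0) : ℝ := ∫ x, x ^ 4 ∂(gaussianReal 0 v)

lemma map_moments {Ω : Type*} [MeasurableSpace Ω] {μ : Measure Ω} {X : Ω → ℝ}
    (hX : Measurable X) {v : ℝ≥0} (h : μ.map X = gaussianReal 0 v) :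
    (∫ ω, X ω ^ 2 ∂μ = v) ∧ Integrable (fun ω => X ω ^ 2) μ ∧
      Integrable (fun ω => X ω ^ 4) μ ∧ ∫ ω, X ω ^ 4 ∂μ = mu4 v := by
  have h2 : ∀ n : ℕ, Integrable (fun ω => X ω ^ n) μ := by
    intro n
    have h3 := myGauss_integrable_pow v n
    rw [← h, integrable_map_measure
      ((measurable_id'.pow_const n).aestronglyMeasurable) hX.aemeasurable] at h3
    exact h3
  have hi : ∀ n : ℕ, ∫ ω, X ω ^ n ∂μ = ∫ x, x ^ n ∂(gaussianReal 0 v) := by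
    intro n
    rw [← h, integral_map hX.aemeasurable ((measurable_id'.pow_const n).aestronglyMeasurable)]
  exact ⟨by rw [hi 2, myGauss_sq_moment], h2 2, h2 4, hi 4⟩

variable {Ω : Type*} [MeasurableSpace Ω] {μ : Measure Ω} [IsProbabilityMeasure μ]

lemma pair_moments {W : Ω → ℝ × ℝ} (hW : Measurable W) {a b c : ℝ}
    (hlaw : IsCenteredGaussianPair (μ.map W) a b c)
    (hpos : 0 ≤ a + 2 * c + b) (hneg : 0 ≤ a - 2 * c + b) :
    Integrable (fun ω => (W ω).1 * (W ω).2) μ ∧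
    (∫ ω, (W ω).1 * (W ω).2 ∂μ = c) ∧
    Integrable (fun ω => ((W ω).1 * (W ω).2) ^ 2) μ ∧
    ∫ ω, ((W ω).1 * (W ω).2) ^ 2 ∂μ ≤
      (mu4 (a + 2*c + b).toNNReal + mu4 (a - 2*c + b).toNNReal) / 8 := by
  set U : Ω → ℝ := fun ω => (W ω).1 + (W ω).2 with hUdef
  set V : Ω → ℝ := fun ω => (W ω).1 - (W ω).2 with hVdef
  have hUm : Measurable U := hW.fst.add hW.snd
  have hVm : Measurable V := hW.fst.sub hW.snd
  have hUlaw : μ.map U = gaussianReal 0 (a + 2*c + b).toNNReal := by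
    have h1 := hlaw.2 1 1
    rw [Measure.map_map (by fun_prop) hW] at h1
    have e1 : ((fun p : ℝ × ℝ => 1 * p.1 + 1 * p.2) ∘ W) = U := by
      funext ω; simp [hUdef]
    have e2 : (1:ℝ) ^ 2 * a + 2 * 1 * 1 * c + 1 ^ 2 * b = a + 2*c + b := by ring
    rwa [e1, e2] at h1
  have hVlaw : μ.map V = gaussianReal 0 (a - 2*c + b).toNNReal := by
    have h1 := hlaw.2 1 (-1)
    rw [Measure.map_map (by fun_prop) hW] at h1
    have e1 : ((fun p : ℝ × ℝ => 1 * p.1 + (-1) * p.2) ∘ W) = V := by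
      funext ω; simp [hVdef]; ring
    have e2 : (1:ℝ) ^ 2 * a + 2 * 1 * (-1) * c + (-1) ^ 2 * b = a - 2*c + b := by ring
    rwa [e1, e2] at h1
  obtain ⟨hU2, hU2i, hU4i, hU4⟩ := map_moments hUm hUlaw
  obtain ⟨hV2, hV2i, hV4i, hV4⟩ := map_moments hVm hVlaw
  rw [Real.coe_toNNReal _ hpos] at hU2
  rw [Real.coe_toNNReal _ hneg] at hV2
  have hmulEq : ∀ ω, (W ω).1 * (W ω).2 = (U ω ^ 2 - V ω ^ 2) / 4 := by
    intro ω; simp only [hUdef, hVdef]; ring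
  have hint : Integrable (fun ω => (W ω).1 * (W ω).2) μ := by
    refine ((hU2i.sub hV2i).div_const 4).congr
      (Filter.Eventually.of_forall fun ω => ?_)
    simp only [Pi.sub_apply]
    rw [hmulEq ω]
  have hmean : ∫ ω, (W ω).1 * (W ω).2 ∂μ = c := by
    calc ∫ ω, (W ω).1 * (W ω).2 ∂μ = ∫ ω, (U ω ^ 2 - V ω ^ 2) / 4 ∂μ := by
          exact integral_congr_ae (Filter.Eventually.of_forall fun ω => hmulEq ω)
      _ = ((∫ ω, U ω ^ 2 ∂μ) - ∫ ω, V ω ^ 2 ∂μ) / 4 := by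
          rw [integral_div, integral_sub hU2i hV2i]
      _ = c := by rw [hU2, hV2]; ring
  have hsqb : ∀ ω, ((W ω).1 * (W ω).2) ^ 2 ≤ (U ω ^ 4 + V ω ^ 4) / 8 := by
    intro ω
    rw [hmulEq ω]
    nlinarith [sq_nonneg (U ω ^ 2 + V ω ^ 2), sq_nonneg (U ω ^ 2 - V ω ^ 2)]
  have hsqint : Integrable (fun ω => ((W ω).1 * (W ω).2) ^ 2) μ := by
    refine ((hU4i.add hV4i).div_const 8).mono'
      ((hW.fst.mul hW.snd).pow_const 2).aestronglyMeasurable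
      (Filter.Eventually.of_forall fun ω => ?_)
    rw [Real.norm_eq_abs, abs_of_nonneg (sq_nonneg _)]
    exact hsqb ω
  refine ⟨hint, hmean, hsqint, ?_⟩
  calc ∫ ω, ((W ω).1 * (W ω).2) ^ 2 ∂μ ≤ ∫ ω, (U ω ^ 4 + V ω ^ 4) / 8 ∂μ :=
        integral_mono hsqint ((hU4i.add hV4i).div_const 8) hsqb
    _ = (mu4 (a + 2*c + b).toNNReal + mu4 (a - 2*c + b).toNNReal) / 8 := by
        rw [integral_div, integral_add hU4i hV4i, hU4, hV4]
lemma indicator_moment {A : Ω → ℝ} (hA : Measurable A) (h01 : ∀ ω, A ω = 0 ∨ A ω = 1)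
    {p : ℝ} (hp0 : 0 ≤ p) (hP : μ {ω | A ω = 1} = ENNReal.ofReal p) :
    Integrable A μ ∧ ∫ ω, A ω ∂μ = p := by
  have hs : MeasurableSet {ω | A ω = 1} := hA (measurableSet_singleton 1)
  have hAind : A = Set.indicator {ω | A ω = 1} (fun _ => (1:ℝ)) := by
    funext ω
    rcases h01 ω with h | h <;> simp [Set.indicator_apply, h]
  constructor
  · rw [hAind]
    exact (integrable_const (1:ℝ)).indicator hs
  · rw [hAind, integral_indicator_const _ hs, measureReal_def, hP, ENNReal.toReal_ofReal hp0, smul_eq_mul, mul_one]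

lemma term_moments {A B : Ω → ℝ} {W : Ω → ℝ × ℝ}
    (hA : Measurable A) (hB : Measurable B) (hW : Measurable W)
    (hA01 : ∀ ω, A ω = 0 ∨ A ω = 1) (hB01 : ∀ ω, B ω = 0 ∨ B ω = 1)
    {p q : ℝ} (hp : 0 ≤ p) (hq : 0 ≤ q) (hp1 : p ≤ 1) (hq1 : q ≤ 1)
    (hPA : μ {ω | A ω = 1} = ENNReal.ofReal p)
    (hPB : μ {ω | B ω = 1} = ENNReal.ofReal q)
    (hABindep : IndepFun A B μ)
    (hprod : IndepFun (fun ω => (A ω, B ω)) W μ)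
    {a b c : ℝ} (hlaw : IsCenteredGaussianPair (μ.map W) a b c)
    (hpos : 0 ≤ a + 2 * c + b) (hneg : 0 ≤ a - 2 * c + b) :
    MemLp (fun ω => (A ω * (W ω).1) * (B ω * (W ω).2)) 2 μ ∧
    (∫ ω, (A ω * (W ω).1) * (B ω * (W ω).2) ∂μ = p * q * c) ∧
    variance (fun ω => (A ω * (W ω).1) * (B ω * (W ω).2)) μ ≤
      (mu4 (a + 2*c + b).toNNReal + mu4 (a - 2*c + b).toNNReal) / 8 := by
  obtain ⟨hgint, hgmean, hg2int, hg2bd⟩ := pair_moments hW hlaw hpos hneg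
  set g : Ω → ℝ := fun ω => (W ω).1 * (W ω).2 with hgdef
  set h : Ω → ℝ := fun ω => A ω * B ω with hhdef
  set x : Ω → ℝ := fun ω => (A ω * (W ω).1) * (B ω * (W ω).2) with hxdef
  have hxm : Measurable x := ((hA.mul hW.fst).mul (hB.mul hW.snd))
  have hhm : Measurable h := hA.mul hB
  have hgm : Measurable g := hW.fst.mul hW.snd
  have hAA : ∀ ω, A ω * A ω = A ω := fun ω => by rcases hA01 ω with h | h <;> rw [h] <;> ring
  have hBB : ∀ ω, B ω * B ω = B ω := fun ω => by rcases hB01 ω with h | h <;> rw [h] <;> ring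
  have hA1 : ∀ ω, |A ω| ≤ 1 := fun ω => by rcases hA01 ω with h | h <;> rw [h] <;> norm_num
  have hB1 : ∀ ω, |B ω| ≤ 1 := fun ω => by rcases hB01 ω with h | h <;> rw [h] <;> norm_num
  have hxeq : ∀ ω, x ω = h ω * g ω := fun ω => by simp only [hxdef, hhdef, hgdef]; ring
  have hx2eq : ∀ ω, x ω ^ 2 = h ω * g ω ^ 2 := by
    intro ω
    have : x ω ^ 2 = (A ω * A ω) * (B ω * B ω) * g ω ^ 2 := by
      simp only [hxdef, hgdef]; ring
    rw [this, hAA, hBB]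
  have hh1 : ∀ ω, |h ω| ≤ 1 := fun ω => by
    rw [hhdef, abs_mul]
    exact mul_le_one₀ (hA1 ω) (abs_nonneg _) (hB1 ω)
  obtain ⟨hAint, hAmean⟩ := indicator_moment hA hA01 hp hPA
  obtain ⟨hBint, hBmean⟩ := indicator_moment hB hB01 hq hPB
  have hhint : Integrable h μ := by
    refine (integrable_const (1:ℝ)).mono' hhm.aestronglyMeasurable
      (Filter.Eventually.of_forall fun ω => ?_)
    rw [Real.norm_eq_abs]; simpa using hh1 ω
  have hhmean : ∫ ω, h ω ∂μ = p * q := by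
    have h2 := hABindep.integral_mul_eq_mul_integral hAint.aestronglyMeasurable hBint.aestronglyMeasurable
    have e1 : integral μ (A * B) = ∫ ω, A ω * B ω ∂μ := rfl
    have e2 : integral μ A = ∫ ω, A ω ∂μ := rfl
    have e3 : integral μ B = ∫ ω, B ω ∂μ := rfl
    rw [e1, e2, e3] at h2
    simp only [hhdef]
    rw [h2, hAmean, hBmean]
  have hIhg : IndepFun h g μ := by
    have := hprod.comp (measurable_fst.mul measurable_snd) (measurable_fst.mul measurable_snd)
    exact this
  have hIhg2 : IndepFun h (fun ω => g ω ^ 2) μ := by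
    have := hprod.comp (measurable_fst.mul measurable_snd)
      ((measurable_fst.mul measurable_snd).pow_const 2)
    exact this
  have hxint : Integrable x μ := by
    refine hgint.mono hxm.aestronglyMeasurable (Filter.Eventually.of_forall fun ω => ?_)
    show |x ω| ≤ |g ω|
    rw [hxeq ω, abs_mul]
    calc |h ω| * |g ω| ≤ 1 * |g ω| := by
          exact mul_le_mul_of_nonneg_right (hh1 ω) (abs_nonneg _)
      _ = |g ω| := one_mul _
  have hxmean : ∫ ω, x ω ∂μ = p * q * c := by
    have h2 := hIhg.integral_mul_eq_mul_integral hhint.aestronglyMeasurable hgint.aestronglyMeasurable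
    simp only [Pi.mul_apply] at h2
    calc ∫ ω, x ω ∂μ = ∫ ω, h ω * g ω ∂μ :=
          integral_congr_ae (Filter.Eventually.of_forall fun ω => hxeq ω)
      _ = (∫ ω, h ω ∂μ) * ∫ ω, g ω ∂μ := h2
      _ = p * q * c := by rw [hhmean, hgmean]
  have hx2int : Integrable (fun ω => x ω ^ 2) μ := by
    refine hg2int.mono' (hxm.pow_const 2).aestronglyMeasurable
      (Filter.Eventually.of_forall fun ω => ?_)
    show |x ω ^ 2| ≤ ((W ω).1 * (W ω).2) ^ 2
    rw [abs_of_nonneg (sq_nonneg _), hx2eq ω]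
    calc h ω * g ω ^ 2 ≤ g ω ^ 2 :=
          mul_le_of_le_one_left (sq_nonneg _) (le_of_abs_le (hh1 ω))
      _ = ((W ω).1 * (W ω).2) ^ 2 := rfl
  have hmem : MemLp x 2 μ := by
    rw [memLp_two_iff_integrable_sq hxm.aestronglyMeasurable]
    exact hx2int.congr (Filter.Eventually.of_forall fun ω => by simp [Pi.pow_apply])
  have hx2mean : ∫ ω, x ω ^ 2 ∂μ ≤
      (mu4 (a + 2*c + b).toNNReal + mu4 (a - 2*c + b).toNNReal) / 8 := by
    have h2 := hIhg2.integral_mul_eq_mul_integral hhint.aestronglyMeasurable hg2int.aestronglyMeasurable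
    simp only [Pi.mul_apply] at h2
    have hg2nonneg : 0 ≤ ∫ ω, g ω ^ 2 ∂μ :=
      integral_nonneg fun ω => sq_nonneg _
    calc ∫ ω, x ω ^ 2 ∂μ = ∫ ω, h ω * g ω ^ 2 ∂μ :=
          integral_congr_ae (Filter.Eventually.of_forall fun ω => hx2eq ω)
      _ = (∫ ω, h ω ∂μ) * ∫ ω, g ω ^ 2 ∂μ := h2
      _ = p * q * ∫ ω, g ω ^ 2 ∂μ := by rw [hhmean]
      _ ≤ 1 * ∫ ω, g ω ^ 2 ∂μ := by
          refine mul_le_mul_of_nonneg_right ?_ hg2nonneg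
          calc p * q ≤ 1 * 1 := mul_le_mul hp1 hq1 hq (by norm_num)
            _ = 1 := by norm_num
      _ = ∫ ω, g ω ^ 2 ∂μ := one_mul _
      _ ≤ _ := hg2bd
  refine ⟨hmem, hxmean, ?_⟩
  have hvar := variance_eq_sub hmem
  have hsq : μ[x ^ 2] = ∫ ω, x ω ^ 2 ∂μ :=
    integral_congr_ae (Filter.Eventually.of_forall fun ω => by simp [Pi.pow_apply])
  rw [hvar, hsq]
  have hxsq : 0 ≤ (μ[x]) ^ 2 := sq_nonneg _
  linarith
lemma prob_concentration {x : ℕ → Ω → ℝ} {e : ℕ → ℝ} {C : ℝ}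
    (hmem : ∀ s, MemLp (x s) 2 μ)
    (hmean : ∀ s, ∫ ω, x s ω ∂μ = e s)
    (hvar : ∀ s, variance (x s) μ ≤ C)
    (hind : ∀ s t, s ≠ t → IndepFun (x s) (x t) μ)
    {ε : ℝ} (hε : 0 < ε) :
    Tendsto (fun D : ℕ => μ {ω | ε ≤ |(∑ s ∈ Finset.range D, x s ω) / D
      - (∑ s ∈ Finset.range D, e s) / D|}) atTop (𝓝 0) := by
  have hC : 0 ≤ C := le_trans (variance_nonneg _ _) (hvar 0)
  have key : ∀ D : ℕ, 1 ≤ D → μ {ω | ε ≤ |(∑ s ∈ Finset.range D, x s ω) / D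
      - (∑ s ∈ Finset.range D, e s) / D|} ≤ ENNReal.ofReal (C / ε ^ 2 / D) := by
    intro D hD
    have hDpos : (0:ℝ) < D := by exact_mod_cast hD
    set S : Ω → ℝ := ∑ s ∈ Finset.range D, x s with hSdef
    have hSapp : ∀ ω, S ω = ∑ s ∈ Finset.range D, x s ω := fun ω => by
      rw [hSdef]; simp [Finset.sum_apply]
    have hSmem : MemLp S 2 μ := memLp_finset_sum' _ (fun s _ => hmem s)
    have hSmean : μ[S] = ∑ s ∈ Finset.range D, e s := by
      rw [hSdef]
      simp only [Finset.sum_apply]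
      rw [integral_finset_sum _ (fun s _ => (hmem s).integrable one_le_two)]
      exact Finset.sum_congr rfl fun s _ => hmean s
    have hSvar : variance S μ ≤ C * D := by
      rw [hSdef, IndepFun.variance_sum (fun s _ => hmem s)
        (fun s _ t _ hst => by exact hind s t hst)]
      calc ∑ s ∈ Finset.range D, variance (x s) μ ≤ ∑ _s ∈ Finset.range D, C :=
            Finset.sum_le_sum fun s _ => hvar s
        _ = C * D := by simp [mul_comm]
    have hcheb := meas_ge_le_variance_div_sq (μ := μ) hSmem
      (c := ε * D) (by positivity)
    have hseteq : {ω | ε ≤ |(∑ s ∈ Finset.range D, x s ω) / D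
        - (∑ s ∈ Finset.range D, e s) / D|} = {ω | ε * D ≤ |S ω - μ[S]|} := by
      ext ω
      simp only [Set.mem_setOf_eq]
      rw [hSmean, hSapp ω, div_sub_div_same, abs_div, abs_of_pos hDpos, le_div_iff₀ hDpos]
    rw [hseteq]
    refine hcheb.trans (ENNReal.ofReal_le_ofReal ?_)
    have h1 : variance S μ / (ε * D) ^ 2 ≤ (C * D) / (ε * D) ^ 2 := by
      gcongr
    have h2 : (C * D) / (ε * D) ^ 2 = C / ε ^ 2 / D := by
      field_simp
    rw [← h2]; exact h1
  have hupper : Tendsto (fun D : ℕ => ENNReal.ofReal (C / ε ^ 2 / D)) atTop (𝓝 0) := by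
    have hreal : Tendsto (fun D : ℕ => C / ε ^ 2 / D) atTop (𝓝 0) :=
      tendsto_const_div_atTop_nhds_zero_nat (C / ε ^ 2)
    have h2 := ENNReal.tendsto_ofReal hreal
    rwa [ENNReal.ofReal_zero] at h2
  refine tendsto_of_tendsto_of_tendsto_of_le_of_le'
    (tendsto_const_nhds : Tendsto (fun _ : ℕ => (0:ENNReal)) atTop (𝓝 0)) hupper
    (Filter.Eventually.of_forall fun D => zero_le) ?_
  filter_upwards [Filter.eventually_ge_atTop 1] with D hD
  exact key D hD

section Mixed

variable {Ω' : Type*} [MeasurableSpace Ω'] {μ' : MeasureTheory.Measure Ω'}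
  [IsProbabilityMeasure μ'] {Hi Hj : ℕ → Ω' → ℝ} {Yt : ℕ → Ω' → ℝ × ℝ}

lemma mixed_measurable (hHi : ∀ s, Measurable (Hi s)) (hHj : ∀ s, Measurable (Hj s))
    (hYt : ∀ s, Measurable (Yt s)) :
    ∀ i, @Measurable _ _ _ (mixedMS i) (mixedFam Hi Hj Yt i) := by
  rintro (u | u | u)
  exacts [hHi u, hHj u, hYt u]

lemma triple_indep (hHi : ∀ s, Measurable (Hi s)) (hHj : ∀ s, Measurable (Hj s))
    (hYt : ∀ s, Measurable (Yt s))
    (hindep : iIndepFun (m := mixedMS) (mixedFam Hi Hj Yt) μ') (s t : ℕ) (hst : s ≠ t) :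
    IndepFun (fun ω => (Hi s ω * (Yt s ω).1) * (Hj s ω * (Yt s ω).2))
      (fun ω => (Hi t ω * (Yt t ω).1) * (Hj t ω * (Yt t ω).2)) μ' := by
  classical
  have hmeasAll := mixed_measurable hHi hHj hYt
  set S : Finset (ℕ ⊕ ℕ ⊕ ℕ) :=
    {Sum.inl s, Sum.inr (Sum.inl s), Sum.inr (Sum.inr s)} with hS
  set T : Finset (ℕ ⊕ ℕ ⊕ ℕ) :=
    {Sum.inl t, Sum.inr (Sum.inl t), Sum.inr (Sum.inr t)} with hT
  have hST : Disjoint S T := by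
    rw [Finset.disjoint_left]
    intro a haS haT
    rw [hS, Finset.mem_insert, Finset.mem_insert, Finset.mem_singleton] at haS
    rw [hT, Finset.mem_insert, Finset.mem_insert, Finset.mem_singleton] at haT
    rcases haS with h | h | h <;> rcases haT with h' | h' | h' <;> subst h <;> simp_all
  have base := hindep.indepFun_finset S T hST hmeasAll
  letI : ∀ i : {y // y ∈ S}, MeasurableSpace (mixedCod ℕ ℕ ℕ (i : ℕ ⊕ ℕ ⊕ ℕ)) :=
    fun i => mixedMS (i : ℕ ⊕ ℕ ⊕ ℕ)
  letI : ∀ i : {y // y ∈ T}, MeasurableSpace (mixedCod ℕ ℕ ℕ (i : ℕ ⊕ ℕ ⊕ ℕ)) :=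
    fun i => mixedMS (i : ℕ ⊕ ℕ ⊕ ℕ)
  have hs1 : Sum.inl s ∈ S := by rw [hS]; simp
  have hs2 : Sum.inr (Sum.inl s) ∈ S := by rw [hS]; simp
  have hs3 : Sum.inr (Sum.inr s) ∈ S := by rw [hS]; simp
  have ht1 : Sum.inl t ∈ T := by rw [hT]; simp
  have ht2 : Sum.inr (Sum.inl t) ∈ T := by rw [hT]; simp
  have ht3 : Sum.inr (Sum.inr t) ∈ T := by rw [hT]; simp
  let F : (∀ i : {y // y ∈ S}, mixedCod ℕ ℕ ℕ (i : ℕ ⊕ ℕ ⊕ ℕ)) → ℝ := fun g =>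
    ((show ℝ from g ⟨Sum.inl s, hs1⟩) *
        (show ℝ × ℝ from g ⟨Sum.inr (Sum.inr s), hs3⟩).1) *
      ((show ℝ from g ⟨Sum.inr (Sum.inl s), hs2⟩) *
        (show ℝ × ℝ from g ⟨Sum.inr (Sum.inr s), hs3⟩).2)
  let G : (∀ i : {y // y ∈ T}, mixedCod ℕ ℕ ℕ (i : ℕ ⊕ ℕ ⊕ ℕ)) → ℝ := fun g =>
    ((show ℝ from g ⟨Sum.inl t, ht1⟩) *
        (show ℝ × ℝ from g ⟨Sum.inr (Sum.inr t), ht3⟩).1) *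
      ((show ℝ from g ⟨Sum.inr (Sum.inl t), ht2⟩) *
        (show ℝ × ℝ from g ⟨Sum.inr (Sum.inr t), ht3⟩).2)
  have m1 : Measurable (fun g : (∀ i : {y // y ∈ S}, mixedCod ℕ ℕ ℕ (i : ℕ ⊕ ℕ ⊕ ℕ)) =>
      show ℝ from g ⟨Sum.inl s, hs1⟩) := measurable_pi_apply _
  have m2 : Measurable (fun g : (∀ i : {y // y ∈ S}, mixedCod ℕ ℕ ℕ (i : ℕ ⊕ ℕ ⊕ ℕ)) =>
      show ℝ from g ⟨Sum.inr (Sum.inl s), hs2⟩) := measurable_pi_apply _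
  have m3 : Measurable (fun g : (∀ i : {y // y ∈ S}, mixedCod ℕ ℕ ℕ (i : ℕ ⊕ ℕ ⊕ ℕ)) =>
      show ℝ × ℝ from g ⟨Sum.inr (Sum.inr s), hs3⟩) := measurable_pi_apply _
  have n1 : Measurable (fun g : (∀ i : {y // y ∈ T}, mixedCod ℕ ℕ ℕ (i : ℕ ⊕ ℕ ⊕ ℕ)) =>
      show ℝ from g ⟨Sum.inl t, ht1⟩) := measurable_pi_apply _
  have n2 : Measurable (fun g : (∀ i : {y // y ∈ T}, mixedCod ℕ ℕ ℕ (i : ℕ ⊕ ℕ ⊕ ℕ)) =>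
      show ℝ from g ⟨Sum.inr (Sum.inl t), ht2⟩) := measurable_pi_apply _
  have n3 : Measurable (fun g : (∀ i : {y // y ∈ T}, mixedCod ℕ ℕ ℕ (i : ℕ ⊕ ℕ ⊕ ℕ)) =>
      show ℝ × ℝ from g ⟨Sum.inr (Sum.inr t), ht3⟩) := measurable_pi_apply _
  have hF : Measurable F := (m1.mul m3.fst).mul (m2.mul m3.snd)
  have hG : Measurable G := (n1.mul n3.fst).mul (n2.mul n3.snd)
  have := base.comp hF hG
  exact this

end Mixed

end AuxLemmas

/-- Corollary 2 (off-diagonal): under `∑_{s<D} p_is p_js ≍ D` and `K_ij ≠ 0`, the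
uncorrected estimator `G_ij^{(D)}/D` converges in probability to `K_ij` iff
`(∑_{s<D} p_is p_js)/D → 1`. -/
theorem uncorrected_gram_offdiag_consistent_iff
    {Ω : Type*} [MeasurableSpace Ω] (μ : Measure Ω) [IsProbabilityMeasure μ]
    (Kii Kjj Kij : ℝ) (hKii : 0 < Kii) (hKjj : 0 < Kjj) (hKpsd : Kij ^ 2 ≤ Kii * Kjj)
    (pi pj : ℕ → ℝ) (hpi : ∀ s, 0 < pi s ∧ pi s ≤ 1) (hpj : ∀ s, 0 < pj s ∧ pj s ≤ 1)
    (Yt : ℕ → Ω → ℝ × ℝ) (hYt : ∀ s, Measurable (Yt s))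
    (hYtlaw : ∀ s, IsCenteredGaussianPair (μ.map (Yt s)) Kii Kjj Kij)
    (Hi Hj : ℕ → Ω → ℝ) (hHi : ∀ s, Measurable (Hi s)) (hHj : ∀ s, Measurable (Hj s))
    (hHi01 : ∀ s ω, Hi s ω = 0 ∨ Hi s ω = 1) (hHj01 : ∀ s ω, Hj s ω = 0 ∨ Hj s ω = 1)
    (hHiP : ∀ s, μ {ω | Hi s ω = 1} = ENNReal.ofReal (pi s))
    (hHjP : ∀ s, μ {ω | Hj s ω = 1} = ENNReal.ofReal (pj s))
    (hindep : iIndepFun (m := mixedMS) (mixedFam Hi Hj Yt) μ)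
    (x : ℕ → Ω → ℝ)
    (hx : x = fun s ω => (Hi s ω * (Yt s ω).1) * (Hj s ω * (Yt s ω).2))
    (m M : ℝ) (hm : 0 < m) (hmM : m < M) (n₀ : ℕ)
    (hasymp : ∀ D > n₀, m < (∑ s ∈ range D, pi s * pj s) / D ∧
      (∑ s ∈ range D, pi s * pj s) / D < M)
    (hKij : Kij ≠ 0) :
    (∀ ε > (0 : ℝ),
        Tendsto (fun D => μ {ω | ε < |(∑ s ∈ range D, x s ω) / D - Kij|})
          atTop (𝓝 0)) ↔
      Tendsto (fun D : ℕ => (∑ s ∈ range D, pi s * pj s) / D) atTop (𝓝 1) := by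
  have hpos : 0 ≤ Kii + 2 * Kij + Kjj := by
    nlinarith [sq_nonneg (Kii - Kjj), add_pos hKii hKjj, hKpsd]
  have hneg : 0 ≤ Kii - 2 * Kij + Kjj := by
    nlinarith [sq_nonneg (Kii - Kjj), add_pos hKii hKjj, hKpsd]
  have hAB : ∀ s : ℕ, IndepFun (Hi s) (Hj s) μ := by
    intro s
    have := hindep.indepFun (i := Sum.inl s) (j := Sum.inr (Sum.inl s)) (by simp)
    exact this
  have hprod : ∀ s : ℕ, IndepFun (fun ω => (Hi s ω, Hj s ω)) (Yt s) μ := by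
    intro s
    have := hindep.indepFun_prodMk (mixed_measurable hHi hHj hYt)
      (Sum.inl s) (Sum.inr (Sum.inl s)) (Sum.inr (Sum.inr s)) (by simp) (by simp)
    exact this
  have hterm := fun s : ℕ => term_moments (μ := μ) (hHi s) (hHj s) (hYt s)
    (hHi01 s) (hHj01 s) (hpi s).1.le (hpj s).1.le (hpi s).2 (hpj s).2
    (hHiP s) (hHjP s) (hAB s) (hprod s) (hYtlaw s) hpos hneg
  have hxs : ∀ s, x s = fun ω => (Hi s ω * (Yt s ω).1) * (Hj s ω * (Yt s ω).2) :=
    fun s => by rw [hx]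
  have hmem : ∀ s, MemLp (x s) 2 μ := fun s => by rw [hxs s]; exact (hterm s).1
  have hmean : ∀ s, ∫ ω, x s ω ∂μ = pi s * pj s * Kij := fun s => by
    rw [hxs s]; exact (hterm s).2.1
  have hvar : ∀ s, variance (x s) μ ≤
      (mu4 (Kii + 2*Kij + Kjj).toNNReal + mu4 (Kii - 2*Kij + Kjj).toNNReal) / 8 :=
    fun s => by rw [hxs s]; exact (hterm s).2.2
  have hind : ∀ s t, s ≠ t → IndepFun (x s) (x t) μ := fun s t hst => by
    rw [hxs s, hxs t]; exact triple_indep hHi hHj hYt hindep s t hst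
  have hkey : ∀ ε : ℝ, 0 < ε → Tendsto (fun D : ℕ => μ {ω |
      ε ≤ |(∑ s ∈ Finset.range D, x s ω) / D
        - (∑ s ∈ Finset.range D, pi s * pj s * Kij) / D|}) atTop (𝓝 0) :=
    fun ε hε => prob_concentration hmem hmean hvar hind hε
  have e1 : ∀ D : ℕ, (∑ s ∈ Finset.range D, pi s * pj s * Kij) / (D:ℝ)
      = ((∑ s ∈ Finset.range D, pi s * pj s) / D) * Kij := by
    intro D; rw [← Finset.sum_mul]; ring
  have hKabs : 0 < |Kij| := abs_pos.mpr hKij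
  constructor
  · intro h
    rw [Metric.tendsto_atTop]
    intro ε hε
    set δ := |Kij| * ε / 3 with hδ
    have hδpos : 0 < δ := by positivity
    have h1 := (hkey δ hδpos).eventually_lt_const (by norm_num : (0:ENNReal) < 1/2)
    have h2 := (h δ hδpos).eventually_lt_const (by norm_num : (0:ENNReal) < 1/2)
    rw [Filter.eventually_atTop] at h1 h2
    obtain ⟨N1, hN1⟩ := h1
    obtain ⟨N2, hN2⟩ := h2
    refine ⟨max N1 N2, fun n hn => ?_⟩
    have hA := hN1 n (le_trans (le_max_left _ _) hn)
    have hB := hN2 n (le_trans (le_max_right _ _) hn)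
    set A := {ω | δ ≤ |(∑ s ∈ Finset.range n, x s ω) / n
      - (∑ s ∈ Finset.range n, pi s * pj s * Kij) / n|} with hAdef
    set B := {ω | δ < |(∑ s ∈ Finset.range n, x s ω) / n - Kij|} with hBdef
    have hunion : μ (A ∪ B) < 1 := by
      calc μ (A ∪ B) ≤ μ A + μ B := measure_union_le _ _
        _ < 1/2 + 1/2 := ENNReal.add_lt_add hA hB
        _ = 1 := ENNReal.add_halves 1
    have hne : ((A ∪ B)ᶜ).Nonempty := by
      by_contra hcon
      rw [Set.not_nonempty_iff_eq_empty, Set.compl_empty_iff] at hcon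
      rw [hcon, measure_univ] at hunion
      exact lt_irrefl _ hunion
    obtain ⟨ω, hω⟩ := hne
    rw [Set.mem_compl_iff, Set.mem_union] at hω
    push_neg at hω
    obtain ⟨hω1, hω2⟩ := hω
    rw [hAdef, Set.mem_setOf_eq, not_le] at hω1
    rw [hBdef, Set.mem_setOf_eq, not_lt] at hω2
    rw [e1 n] at hω1
    set Sn := (∑ s ∈ Finset.range n, x s ω) / (n:ℝ)
    set r := (∑ s ∈ Finset.range n, pi s * pj s) / (n:ℝ)
    have htri : |r * Kij - Kij| ≤ 2 * δ := by
      calc |r * Kij - Kij| ≤ |r * Kij - Sn| + |Sn - Kij| := abs_sub_le _ _ _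
        _ ≤ δ + δ := add_le_add (by rw [abs_sub_comm]; exact hω1.le) hω2
        _ = 2 * δ := by ring
    have h5 : |(r - 1) * Kij| ≤ 2 * δ := by
      have : (r - 1) * Kij = r * Kij - Kij := by ring
      rw [this]; exact htri
    rw [abs_mul] at h5
    have h6 : |r - 1| ≤ 2 * δ / |Kij| := (le_div_iff₀ hKabs).mpr h5
    have h7 : 2 * δ / |Kij| = 2 * ε / 3 := by
      rw [hδ]; field_simp
    rw [Real.dist_eq]
    rw [h7] at h6
    calc |r - 1| ≤ 2 * ε / 3 := h6
      _ < ε := by linarith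
  · intro hr ε hε
    have h1 : Tendsto (fun D : ℕ => ((∑ s ∈ Finset.range D, pi s * pj s) / D) * Kij)
        atTop (𝓝 Kij) := by
      have := hr.mul_const Kij
      rwa [one_mul] at this
    have h2 : ∀ᶠ D : ℕ in atTop,
        |((∑ s ∈ Finset.range D, pi s * pj s) / D) * Kij - Kij| < ε / 2 := by
      have h3 := (Metric.tendsto_nhds.mp h1) (ε / 2) (half_pos hε)
      filter_upwards [h3] with D hD
      rwa [Real.dist_eq] at hD
    refine tendsto_of_tendsto_of_tendsto_of_le_of_le'
      (tendsto_const_nhds : Tendsto (fun _ : ℕ => (0:ENNReal)) atTop (𝓝 0))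
      (hkey (ε/2) (half_pos hε))
      (Filter.Eventually.of_forall fun D => zero_le) ?_
    filter_upwards [h2] with D hD
    apply measure_mono
    intro ω hω
    rw [Set.mem_setOf_eq] at hω ⊢
    rw [e1 D]
    set Sn := (∑ s ∈ Finset.range D, x s ω) / (D:ℝ)
    set r := (∑ s ∈ Finset.range D, pi s * pj s) / (D:ℝ)
    have htri : |Sn - Kij| ≤ |Sn - r * Kij| + |r * Kij - Kij| := abs_sub_le _ _ _
    linarith [hω, hD, htri]
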